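/- Let d, r ∈ ℕ with r ≥ 1, let γ > 0 be real, let α > 5/2 be real, and let v̂ : ℤ^d → ℂ satisfy ‖v̂‖_α < ∞. Then there exists a constant c₁ > 0, depending only on d, α, γ and v̂ (in particular independent of the moduli, the generating vectors, the anti-aliasing family and the vector y), such that for all moduli n_1,…,n_r ≥ 1, all generating vectors z_1,…,z_r ∈ ℤ^d, every minimal anti-aliasing family (h_ξ)_{ξ ∈ ℤ_{n_1}×⋯×ℤ_{n_r}}, and every y ∈ ℂ^{ℤ_{n_1}×⋯×ℤ_{n_r}}: ‖(DW − WD) y‖₂ ≤ c₁ · ‖(D + I) y‖₂, where D, W are the matrices defined in the context and I is the identity matrix. -/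

import Mathlib

noncomputable section

/-- Integer dot product on `ℤ^d`. -/
def dotZ {d : ℕ} (h z : Fin d → ℤ) : ℤ := ∑ i, h i * z i

/-- The squared Korobov weight `r_α(h)² = ∏_j max(|h_j|^(2α), 1)`. -/
def korWeightSq {d : ℕ} (α : ℝ) (h : Fin d → ℤ) : ℝ :=
  ∏ j, max (|(h j : ℝ)| ^ (2 * α)) 1

/-- The squared Euclidean norm `‖h‖₂² = Σ_j h_j²` of `h ∈ ℤ^d`. -/
def normSq {d : ℕ} (h : Fin d → ℤ) : ℝ := ∑ j, (h j : ℝ) ^ 2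

/-- The Euclidean norm of a complex vector. -/
def vecNorm {ι : Type*} [Fintype ι] (y : ι → ℂ) : ℝ := Real.sqrt (∑ ξ, ‖y ξ‖ ^ 2)

/-- The diagonal matrix `D` with entries `2π²γ‖h_ξ‖₂²`, indexed by the
multi-indices `ξ ∈ ℤ_{n_1} × ⋯ × ℤ_{n_r}`. -/
def DmatR {d r : ℕ} (γ : ℝ) (n : Fin r → ℕ)
    (hfam : ((j : Fin r) → Fin (n j)) → Fin d → ℤ) :
    Matrix ((j : Fin r) → Fin (n j)) ((j : Fin r) → Fin (n j)) ℂ :=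
  Matrix.diagonal fun ξ => ((2 * Real.pi ^ 2 * γ * normSq (hfam ξ) : ℝ) : ℂ)

/-- The multiplication matrix `W` with entries
`W_{ξ,ξ'} = (1/γ) Σ_{h·z_j ≡ ξ_j−ξ'_j (mod n_j) ∀j} v̂(h)`. -/
def WmatR {d r : ℕ} (γ : ℝ) (vhat : (Fin d → ℤ) → ℂ) (n : Fin r → ℕ)
    (z : Fin r → Fin d → ℤ) :
    Matrix ((j : Fin r) → Fin (n j)) ((j : Fin r) → Fin (n j)) ℂ :=
  Matrix.of fun ξ ξ' => (1 / (γ : ℂ)) *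
    ∑' h : {h : Fin d → ℤ // ∀ j,
        ((dotZ h (z j) : ZMod (n j))) = ((ξ j : ℕ) : ZMod (n j)) - ((ξ' j : ℕ) : ZMod (n j))},
      vhat h.1


/-!
Write `N ξ = ‖h_ξ‖²`. The commutator has entries
`(DW - WD)_{ξξ'} = 2π² (N ξ - N ξ') Σ_{h ∈ ξ - ξ'} v̂(h)`, the sum running over the lattice class
`ξ - ξ'`. For such `h`, the vectors `h_ξ' + h` and `h_ξ - h` lie in the classes of `ξ` and `ξ'`, so
minimality of the family gives `|‖h_ξ‖ - ‖h_ξ'‖| ≤ ‖h‖`, whence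
`|N ξ - N ξ'| ≤ 2 (1 + ‖h‖²) (1 + N ξ')`. The entries are therefore bounded by
`(1 + N ξ') G(ξ - ξ')`, where `G(δ)` sums `(1 + ‖h‖²) |v̂(h)|` over the class `δ`. The total
`Σ_δ G(δ) = Σ_h (1 + ‖h‖²) |v̂(h)|` does not depend on the lattice and is finite by Cauchy–Schwarz
against the Korobov weight, since `(1 + ‖h‖²)² / r_α(h)² ≲ ∏ⱼ max(|hⱼ|, 1) ^ (4 - 2α)` is summable
exactly when `α > 5/2`. As `ξ' ↦ ξ - ξ'` is injective, every row and column of `G(ξ - ξ')` sums to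
at most this total, and the Schur test turns the entrywise bound into
`‖(DW - WD) y‖ ≲ ‖(1 + N) y‖ ≲ ‖(D + I) y‖`.
-/

open Finset Function Real

section Summability

lemma summable_max_abs_one_rpow_neg {q : ℝ} (hq : 1 < q) :
    Summable fun k : ℤ => max |(k : ℝ)| 1 ^ (-q) := by
  refine ((Real.summable_abs_int_rpow hq).update 0 1).congr fun k => ?_
  rcases eq_or_ne k 0 with rfl | hk
  · simp
  · have hk1 : (1 : ℝ) ≤ |(k : ℝ)| := by exact_mod_cast Int.one_le_abs hk
    simp [update_of_ne hk, max_eq_left hk1]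

lemma summable_fin_prod_apply {β : Type*} {f : β → ℝ} (hf0 : ∀ b, 0 ≤ f b) (hf : Summable f) :
    ∀ d : ℕ, Summable fun h : Fin d → β => ∏ j, f (h j)
  | 0 => .of_finite
  | d + 1 => by
    rw [← (Fin.consEquiv fun _ => β).summable_iff]
    refine (hf.mul_of_nonneg (summable_fin_prod_apply hf0 hf d) hf0
      fun h => prod_nonneg fun j _ => hf0 _).congr fun p => ?_
    simp [Fin.consEquiv_apply, Fin.prod_univ_succ]

def crossWeight {d : ℕ} (h : Fin d → ℤ) : ℝ := ∏ j, max |(h j : ℝ)| 1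

variable {d : ℕ}

lemma normSq_nonneg (h : Fin d → ℤ) : 0 ≤ normSq h := sum_nonneg fun _ _ => sq_nonneg _

lemma one_le_crossWeight (h : Fin d → ℤ) : 1 ≤ crossWeight h :=
  one_le_prod fun _ _ => le_max_right _ _

lemma korWeightSq_eq_crossWeight_rpow {α : ℝ} (hα : 0 ≤ α) (h : Fin d → ℤ) :
    korWeightSq α h = crossWeight h ^ (2 * α) := by
  rw [crossWeight, ← Real.finsetProd_rpow _ _ fun _ _ => by positivity]
  refine prod_congr rfl fun j _ => ?_
  rw [Real.rpow_max (abs_nonneg _) zero_le_one (by positivity), Real.one_rpow]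

lemma one_add_normSq_le (h : Fin d → ℤ) : 1 + normSq h ≤ (d + 1) * crossWeight h ^ 2 := by
  have hW := one_le_crossWeight h
  have hcoord : ∀ j, (h j : ℝ) ^ 2 ≤ crossWeight h ^ 2 := fun j => by
    rw [← sq_abs]
    exact pow_le_pow_left₀ (abs_nonneg _) (le_prod_max_one (mem_univ j) fun i => |(h i : ℝ)|) 2
  have hsum : normSq h ≤ d * crossWeight h ^ 2 := by
    simpa [normSq] using sum_le_sum fun j (_ : j ∈ univ) => hcoord j
  nlinarith

lemma summable_crossWeight_rpow_neg {q : ℝ} (hq : 1 < q) :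
    Summable fun h : Fin d → ℤ => crossWeight h ^ (-q) := by
  refine (summable_fin_prod_apply (fun k => by positivity)
    (summable_max_abs_one_rpow_neg hq) d).congr fun h => ?_
  rw [crossWeight, Real.finsetProd_rpow _ _ fun _ _ => by positivity]

lemma summable_mul_of_summable_sq_mul {ι : Type*} {w P x : ι → ℝ} (hw : ∀ i, 0 < w i)
    (hP : ∀ i, 0 ≤ P i) (hx : ∀ i, 0 ≤ x i) (hxw : Summable fun i => x i ^ 2 * w i)
    (hPw : Summable fun i => P i ^ 2 / w i) : Summable fun i => P i * x i := by
  refine .of_nonneg_of_le (fun i => mul_nonneg (hP i) (hx i)) (fun i => ?_) (hPw.add hxw)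
  have hwi := hw i
  rw [div_add' _ _ _ hwi.ne', le_div_iff₀ hwi]
  nlinarith [sq_nonneg (P i - x i * w i), hP i, hx i]

lemma summable_one_add_normSq_mul_norm {α : ℝ} (hα : 5 / 2 < α) {vhat : (Fin d → ℤ) → ℂ}
    (hv : Summable fun h : Fin d → ℤ => ‖vhat h‖ ^ 2 * korWeightSq α h) :
    Summable fun h => (1 + normSq h) * ‖vhat h‖ := by
  have hkor := korWeightSq_eq_crossWeight_rpow (by linarith : 0 ≤ α) (d := d)
  have hW : ∀ h : Fin d → ℤ, 0 < crossWeight h := fun h => one_pos.trans_le (one_le_crossWeight h)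
  have hkor_pos : ∀ h : Fin d → ℤ, 0 < korWeightSq α h := fun h =>
    hkor h ▸ rpow_pos_of_pos (hW h) _
  refine summable_mul_of_summable_sq_mul hkor_pos (fun h => by linarith [normSq_nonneg h])
    (fun h => norm_nonneg _) hv
    (.of_nonneg_of_le (fun h => div_nonneg (sq_nonneg _) (hkor_pos h).le) (fun h => ?_)
      ((summable_crossWeight_rpow_neg (by linarith : 1 < 2 * α - 4)).mul_left (((d : ℝ) + 1) ^ 2)))
  rw [div_le_iff₀ (hkor_pos h), hkor, mul_assoc, ← Real.rpow_add (hW h),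
    show -(2 * α - 4) + 2 * α = (4 : ℕ) by push_cast; ring, Real.rpow_natCast]
  calc (1 + normSq h) ^ 2 ≤ ((d + 1) * crossWeight h ^ 2) ^ 2 :=
        pow_le_pow_left₀ (by linarith [normSq_nonneg h]) (one_add_normSq_le h) 2
    _ = _ := by ring

end Summability

section SchurTest

variable {ι : Type*} [Fintype ι]

lemma schur_test {a : ι → ι → ℝ} (ha : ∀ i j, 0 ≤ a i j) {R : ℝ} (hR : 0 ≤ R)
    (hrow : ∀ i, ∑ j, a i j ≤ R) (hcol : ∀ j, ∑ i, a i j ≤ R) (u : ι → ℝ) :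
    ∑ i, (∑ j, a i j * u j) ^ 2 ≤ R ^ 2 * ∑ j, u j ^ 2 := by
  have hrow_cs : ∀ i, (∑ j, a i j * u j) ^ 2 ≤ R * ∑ j, a i j * u j ^ 2 := fun i =>
    (sum_sq_le_sum_mul_sum_of_sq_le_mul _ (fun j _ => ha i j)
      (fun j _ => mul_nonneg (ha i j) (sq_nonneg _)) fun j _ => le_of_eq (by ring)).trans
      (mul_le_mul_of_nonneg_right (hrow i)
        (sum_nonneg fun j _ => mul_nonneg (ha i j) (sq_nonneg _)))
  calc ∑ i, (∑ j, a i j * u j) ^ 2 ≤ ∑ i, R * ∑ j, a i j * u j ^ 2 :=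
        sum_le_sum fun i _ => hrow_cs i
    _ = R * ∑ j, (∑ i, a i j) * u j ^ 2 := by rw [← mul_sum, sum_comm]; simp_rw [sum_mul]
    _ ≤ R * ∑ j, R * u j ^ 2 := by gcongr with j; exact hcol j
    _ = R ^ 2 * ∑ j, u j ^ 2 := by rw [← mul_sum]; ring

lemma vecNorm_le_of_schur_test {a : ι → ι → ℝ} (ha : ∀ i j, 0 ≤ a i j) {R : ℝ} (hR : 0 ≤ R)
    (hrow : ∀ i, ∑ j, a i j ≤ R) (hcol : ∀ j, ∑ i, a i j ≤ R) {v w : ι → ℂ}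
    (hvw : ∀ i, ‖v i‖ ≤ ∑ j, a i j * ‖w j‖) : vecNorm v ≤ R * vecNorm w := by
  rw [vecNorm, vecNorm, ← Real.sqrt_sq hR, ← Real.sqrt_mul (sq_nonneg R)]
  refine Real.sqrt_le_sqrt ((sum_le_sum fun i _ => ?_).trans (schur_test ha hR hrow hcol _))
  exact pow_le_pow_left₀ (norm_nonneg _) (hvw i) 2

end SchurTest

lemma abs_norm_sq_sub_norm_sq_le {E : Type*} [SeminormedAddCommGroup E] {a b h : E}
    (hab : ‖a‖ ≤ ‖b + h‖) (hba : ‖b‖ ≤ ‖a - h‖) :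
    |‖a‖ ^ 2 - ‖b‖ ^ 2| ≤ ‖h‖ * (‖h‖ + 2 * ‖b‖) := by
  have hdiff : |‖a‖ - ‖b‖| ≤ ‖h‖ :=
    abs_sub_le_iff.mpr ⟨by linarith [norm_add_le b h], by linarith [norm_sub_le a h]⟩
  have hsum : ‖a‖ + ‖b‖ ≤ ‖h‖ + 2 * ‖b‖ := by linarith [norm_add_le b h]
  rw [sq_sub_sq, abs_mul, abs_of_nonneg (by positivity : 0 ≤ ‖a‖ + ‖b‖), mul_comm ‖h‖]
  exact mul_le_mul hsum hdiff (abs_nonneg _) (by positivity)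

section Lattice

variable {d r : ℕ}

def intToEuclidean : (Fin d → ℤ) →+ EuclideanSpace ℝ (Fin d) where
  toFun h := WithLp.toLp 2 fun j => (h j : ℝ)
  map_zero' := by ext; simp
  map_add' a b := by ext; simp

lemma normSq_eq_norm_sq (h : Fin d → ℤ) : normSq h = ‖intToEuclidean h‖ ^ 2 := by
  simp [normSq, EuclideanSpace.real_norm_sq_eq, intToEuclidean]

lemma abs_normSq_sub_le {a b h : Fin d → ℤ} (hab : normSq a ≤ normSq (b + h))
    (hba : normSq b ≤ normSq (a - h)) :
    |normSq a - normSq b| ≤ 2 * (1 + normSq h) * (1 + normSq b) := by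
  simp only [normSq_eq_norm_sq, map_add, map_sub] at *
  set x := intToEuclidean h
  set y := intToEuclidean b
  have key := abs_norm_sq_sub_norm_sq_le
    ((pow_le_pow_iff_left₀ (norm_nonneg _) (norm_nonneg _) two_ne_zero).mp hab)
    ((pow_le_pow_iff_left₀ (norm_nonneg _) (norm_nonneg _) two_ne_zero).mp hba)
  nlinarith [sq_nonneg (‖x‖ - ‖y‖), norm_nonneg x, norm_nonneg y,
    mul_nonneg (sq_nonneg ‖x‖) (sq_nonneg ‖y‖)]

variable (n : Fin r → ℕ) (z : Fin r → Fin d → ℤ)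

def latticeClass : (Fin d → ℤ) →+ (j : Fin r) → ZMod (n j) where
  toFun h j := (dotZ h (z j) : ZMod (n j))
  map_zero' := by ext; simp [dotZ]
  map_add' a b := by ext; simp [dotZ, add_mul, sum_add_distrib]

def residue (ξ : (j : Fin r) → Fin (n j)) : (j : Fin r) → ZMod (n j) :=
  fun j => ((ξ j : ℕ) : ZMod (n j))

lemma residue_injective : Injective (residue n) := fun ξ ξ' hξ => funext fun j => Fin.ext <| by
  simpa [residue, ZMod.val_natCast, Nat.mod_eq_of_lt] using congrArg ZMod.val (congrFun hξ j)

structure IsMinimalAntiAliasingFamily (hfam : ((j : Fin r) → Fin (n j)) → Fin d → ℤ) : Prop where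
  latticeClass_eq : ∀ ξ, latticeClass n z (hfam ξ) = residue n ξ
  normSq_le : ∀ ξ h, latticeClass n z h = residue n ξ → normSq (hfam ξ) ≤ normSq h

end Lattice

lemma Matrix.diagonal_mul_sub_mul_diagonal_apply {ι R : Type*} [Fintype ι] [DecidableEq ι]
    [CommRing R] (c : ι → R) (M : Matrix ι ι R) (i j : ι) :
    (diagonal c * M - M * diagonal c) i j = (c i - c j) * M i j := by
  simp only [Matrix.sub_apply, Matrix.diagonal_mul, Matrix.mul_diagonal]
  ring

section Commutator

variable {d r : ℕ} {n : Fin r → ℕ} {z : Fin r → Fin d → ℤ}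
  {hfam : ((j : Fin r) → Fin (n j)) → Fin d → ℤ}

lemma IsMinimalAntiAliasingFamily.abs_normSq_sub_le_of_latticeClass_eq
    (hmin : IsMinimalAntiAliasingFamily n z hfam)
    {ξ ξ' : (j : Fin r) → Fin (n j)} {h : Fin d → ℤ}
    (hh : latticeClass n z h = residue n ξ - residue n ξ') :
    |normSq (hfam ξ) - normSq (hfam ξ')| ≤ 2 * (1 + normSq h) * (1 + normSq (hfam ξ')) :=
  abs_normSq_sub_le
    (hmin.normSq_le ξ (hfam ξ' + h) (by rw [map_add, hmin.latticeClass_eq, hh]; abel))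
    (hmin.normSq_le ξ' (hfam ξ - h) (by rw [map_sub, hmin.latticeClass_eq, hh]; abel))

variable (n z) (vhat : (Fin d → ℤ) → ℂ)

def fiberWeight (δ : (j : Fin r) → ZMod (n j)) : ℝ :=
  ∑' h : latticeClass n z ⁻¹' {δ}, (1 + normSq (h : Fin d → ℤ)) * ‖vhat h‖

lemma WmatR_apply (γ : ℝ) (ξ ξ' : (j : Fin r) → Fin (n j)) :
    WmatR γ vhat n z ξ ξ' =
      1 / γ * ∑' h : latticeClass n z ⁻¹' {residue n ξ - residue n ξ'}, vhat h := by
  rw [WmatR, Matrix.of_apply]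
  congr 1
  exact (Equiv.subtypeEquivRight (q := (· ∈ latticeClass n z ⁻¹' {residue n ξ - residue n ξ'}))
    fun h => funext_iff.symm).tsum_eq fun h => vhat h

variable {n z vhat}

lemma fiberWeight_nonneg (δ : (j : Fin r) → ZMod (n j)) : 0 ≤ fiberWeight n z vhat δ :=
  tsum_nonneg fun h => mul_nonneg (by linarith [normSq_nonneg h.1]) (norm_nonneg _)

lemma sum_fiberWeight_comp_le (hg : Summable fun h => (1 + normSq h) * ‖vhat h‖) {ι : Type*}
    [Fintype ι] {f : ι → (j : Fin r) → ZMod (n j)} (hf : Injective f) :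
    ∑ i, fiberWeight n z vhat (f i) ≤ ∑' h, (1 + normSq h) * ‖vhat h‖ := by
  have hfib := hg.hasSum.tsum_fiberwise (latticeClass n z)
  rw [← tsum_fintype (L := .unconditional _), ← hfib.tsum_eq]
  exact tsum_comp_le_tsum_of_inj hfib.summable fiberWeight_nonneg hf

lemma norm_commutator_apply_le {γ : ℝ} (hγ : 0 < γ)
    (hmin : IsMinimalAntiAliasingFamily n z hfam)
    (hg : Summable fun h => (1 + normSq h) * ‖vhat h‖) (ξ ξ' : (j : Fin r) → Fin (n j)) :
    ‖(DmatR γ n hfam * WmatR γ vhat n z - WmatR γ vhat n z * DmatR γ n hfam) ξ ξ'‖ ≤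
      4 * π ^ 2 * (1 + normSq (hfam ξ')) * fiberWeight n z vhat (residue n ξ - residue n ξ') := by
  set δ := residue n ξ - residue n ξ'
  set Δ := |normSq (hfam ξ) - normSq (hfam ξ')|
  have hsv : Summable fun h : latticeClass n z ⁻¹' {δ} => ‖vhat h‖ :=
    (hg.of_nonneg_of_le (fun h => norm_nonneg _) fun h =>
      le_mul_of_one_le_left (norm_nonneg _) (by linarith [normSq_nonneg h])).subtype _
  have hpt : ∀ h : latticeClass n z ⁻¹' {δ},
      Δ * ‖vhat h‖ ≤ 2 * (1 + normSq (hfam ξ')) * ((1 + normSq h.1) * ‖vhat h‖) := fun h => by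
    have := mul_le_mul_of_nonneg_right (hmin.abs_normSq_sub_le_of_latticeClass_eq h.2)
      (norm_nonneg (vhat h))
    linarith
  have hK : (DmatR γ n hfam * WmatR γ vhat n z - WmatR γ vhat n z * DmatR γ n hfam) ξ ξ' =
      ((2 * π ^ 2 * (normSq (hfam ξ) - normSq (hfam ξ')) : ℝ) : ℂ) *
        ∑' h : latticeClass n z ⁻¹' {δ}, vhat h := by
    rw [DmatR, Matrix.diagonal_mul_sub_mul_diagonal_apply, WmatR_apply]
    have hγ' : (γ : ℂ) ≠ 0 := by exact_mod_cast hγ.ne'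
    push_cast
    field_simp
    rfl
  rw [hK, norm_mul, Complex.norm_real, Real.norm_eq_abs, abs_mul,
    abs_of_pos (by positivity : (0 : ℝ) < 2 * π ^ 2), mul_assoc]
  calc _ ≤ 2 * π ^ 2 * ∑' h : latticeClass n z ⁻¹' {δ}, Δ * ‖vhat h‖ := by
        rw [hsv.tsum_mul_left]
        gcongr
        exact norm_tsum_le_tsum_norm hsv
    _ ≤ 2 * π ^ 2 * ∑' h : latticeClass n z ⁻¹' {δ},
          2 * (1 + normSq (hfam ξ')) * ((1 + normSq h.1) * ‖vhat h‖) :=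
        mul_le_mul_of_nonneg_left ((hsv.mul_left _).tsum_le_tsum hpt ((hg.subtype _).mul_left _))
          (by positivity)
    _ = _ := by rw [tsum_mul_left (L := .unconditional _), fiberWeight]; ring

lemma norm_commutator_mulVec_apply_le {γ : ℝ} (hγ : 0 < γ)
    (hmin : IsMinimalAntiAliasingFamily n z hfam)
    (hg : Summable fun h => (1 + normSq h) * ‖vhat h‖) (y : ((j : Fin r) → Fin (n j)) → ℂ)
    (ξ : (j : Fin r) → Fin (n j)) :
    ‖((DmatR γ n hfam * WmatR γ vhat n z - WmatR γ vhat n z * DmatR γ n hfam).mulVec y) ξ‖ ≤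
      ∑ ξ', 4 * π ^ 2 * (1 + 1 / (2 * π ^ 2 * γ)) *
        fiberWeight n z vhat (residue n ξ - residue n ξ') *
          ‖((DmatR γ n hfam + 1).mulVec y) ξ'‖ := by
  refine (norm_sum_le _ _).trans (sum_le_sum fun ξ' _ => ?_)
  set κ := 2 * π ^ 2 * γ
  set N := normSq (hfam ξ')
  have hN := normSq_nonneg (hfam ξ')
  have hDy : ‖((DmatR γ n hfam + 1).mulVec y) ξ'‖ = (1 + κ * N) * ‖y ξ'‖ := by
    rw [DmatR, ← Matrix.diagonal_one, Matrix.diagonal_add, Matrix.mulVec_diagonal, norm_mul,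
      ← Complex.ofReal_one, ← Complex.ofReal_add, Complex.norm_real, Real.norm_eq_abs,
      abs_of_nonneg (by positivity), add_comm]
  have hweight : 1 + N ≤ (1 + 1 / κ) * (1 + κ * N) := by
    have hκ : 0 < κ := by positivity
    rw [show (1 + 1 / κ) * (1 + κ * N) = 1 + N + κ * N + 1 / κ by field_simp; ring]
    have := div_pos one_pos hκ
    nlinarith
  have hF := fiberWeight_nonneg (z := z) (vhat := vhat) (residue n ξ - residue n ξ')
  rw [norm_mul, hDy]
  calc _ ≤ 4 * π ^ 2 * (1 + N) * fiberWeight n z vhat (residue n ξ - residue n ξ') * ‖y ξ'‖ :=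
        mul_le_mul_of_nonneg_right (norm_commutator_apply_le hγ hmin hg ξ ξ') (norm_nonneg _)
    _ ≤ 4 * π ^ 2 * ((1 + 1 / κ) * (1 + κ * N)) *
          fiberWeight n z vhat (residue n ξ - residue n ξ') * ‖y ξ'‖ := by gcongr
    _ = _ := by ring

end Commutator

theorem rankr_first_commutator_bound
    (d r : ℕ) (γ : ℝ) (hγ : 0 < γ) (α : ℝ) (hα : 5 / 2 < α)
    (vhat : (Fin d → ℤ) → ℂ)
    (hv : Summable fun h : Fin d → ℤ => ‖vhat h‖ ^ 2 * korWeightSq α h) :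
    ∃ c₁ : ℝ, 0 < c₁ ∧
      ∀ (n : Fin r → ℕ), (∀ j, 1 ≤ n j) → ∀ (z : Fin r → Fin d → ℤ)
        (hfam : ((j : Fin r) → Fin (n j)) → Fin d → ℤ),
        (∀ ξ j, ((dotZ (hfam ξ) (z j) : ZMod (n j))) = ((ξ j : ℕ) : ZMod (n j))) →
        (∀ ξ (h : Fin d → ℤ),
            (∀ j, ((dotZ h (z j) : ZMod (n j))) = ((ξ j : ℕ) : ZMod (n j))) →
            normSq (hfam ξ) ≤ normSq h) →
        ∀ y : ((j : Fin r) → Fin (n j)) → ℂ,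
          vecNorm ((DmatR γ n hfam * WmatR γ vhat n z
              - WmatR γ vhat n z * DmatR γ n hfam).mulVec y)
            ≤ c₁ * vecNorm ((DmatR γ n hfam + 1).mulVec y) := by
  have hg := summable_one_add_normSq_mul_norm hα hv
  set S := ∑' h, (1 + normSq h) * ‖vhat h‖
  set C := 4 * π ^ 2 * (1 + 1 / (2 * π ^ 2 * γ))
  have hS : 0 ≤ S :=
    tsum_nonneg fun h => mul_nonneg (by linarith [normSq_nonneg h]) (norm_nonneg _)
  have hC : 0 < C := by positivity
  refine ⟨C * S + 1, by positivity, fun n _ z hfam hcong hmin y => ?_⟩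
  have hfam_min : IsMinimalAntiAliasingFamily n z hfam :=
    ⟨fun ξ => funext (hcong ξ), fun ξ h hh => hmin ξ h (congrFun hh)⟩
  have hrow_col : ∀ {ι : Type} [Fintype ι] {f : ι → (j : Fin r) → ZMod (n j)}, Injective f →
      ∑ i, C * fiberWeight n z vhat (f i) ≤ C * S := fun hf => by
    rw [← mul_sum]
    exact mul_le_mul_of_nonneg_left (sum_fiberWeight_comp_le hg hf) hC.le
  calc _ ≤ C * S * vecNorm ((DmatR γ n hfam + 1).mulVec y) :=
        vecNorm_le_of_schur_test (fun _ _ => mul_nonneg hC.le (fiberWeight_nonneg _))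
          (by positivity)
          (fun ξ => hrow_col ((sub_right_injective (b := residue n ξ)).comp (residue_injective n)))
          (fun ξ' => hrow_col ((sub_left_injective (b := residue n ξ')).comp (residue_injective n)))
          (norm_commutator_mulVec_apply_le hγ hfam_min hg y)
    _ ≤ _ := mul_le_mul_of_nonneg_right (by linarith) (sqrt_nonneg _)
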